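/- (Conservation law for Fowler solutions.) Let n ≥ 3, κ > 0, and let v : ℝ → (0, ∞) be twice differentiable satisfying −v''(t) = κ v(t)^((n+2)/(n−2)) − ((n−2)/2)² v(t) for all t, with Hamiltonian H = (1/2) v'(0)² + κ ((n−2)/(2n)) v(0)^(2n/(n−2)) − (1/2)((n−2)/2)² v(0)². Define u_H : ℝⁿ \ {0} → ℝ by u_H(x) = |x|^((2−n)/2) v(log |x|). Then for every r > 0: (1/2^*) ∮_{∂B_r} ⟨x, ν⟩ κ u_H^(2^*) dσ + ∮_{∂B_r} B(r, x, u_H, ∇u_H) dσ = ω_n H, where ω_n is the (n−1)-dimensional Hausdorff measure of the unit sphere S^(n−1) ⊆ ℝⁿ. -/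

import Mathlib

/-!
Since `u_H = f(‖·‖)` with `f(s) = s^((2-n)/2) v(log s)` is radial, every integrand is constant on
`∂B_r`, and `μH[n-1](∂B_r) = r^(n-1) ω_n`; so the left-hand side is `ω_n` times `r^(n-1)` times a
pointwise density. Under the Emden–Fowler substitution `r = eᵗ` this density becomes the Hamiltonian
`½ v'(t)² + G(v(t))` of the Fowler equation `v'' = -G'(v)` at `t = log r`, which is conserved, hence
equal to its value `H` at `t = 0`.
-/

open MeasureTheory Metric Real
open scoped Pointwise RealInnerProductSpace

section Radial

variable {E : Type*} [NormedAddCommGroup E] [InnerProductSpace ℝ E]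

theorem hasFDerivAt_norm {x : E} (hx : x ≠ 0) :
    HasFDerivAt (fun y : E => ‖y‖) (‖x‖⁻¹ • innerSL ℝ x) x := by
  have h := (hasStrictFDerivAt_norm_sq x).hasFDerivAt.sqrt (by positivity)
  simp only [Real.sqrt_sq (norm_nonneg _)] at h
  refine h.congr_fderiv ?_
  ext y
  simp only [smul_apply, innerSL_apply_apply, smul_eq_mul, nsmul_eq_mul, Nat.cast_ofNat]
  field_simp

theorem HasDerivAt.hasGradientAt_comp_norm [CompleteSpace E] {x : E} (hx : x ≠ 0)
    {f : ℝ → ℝ} {f' : ℝ} (hf : HasDerivAt f f' ‖x‖) :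
    HasGradientAt (fun y : E => f ‖y‖) ((f' / ‖x‖) • x) x := by
  rw [hasGradientAt_iff_hasFDerivAt]
  refine (hf.comp_hasFDerivAt x (hasFDerivAt_norm hx)).congr_fderiv ?_
  ext y
  rw [InnerProductSpace.toDual_apply_apply]
  simp only [smul_apply, innerSL_apply_apply, smul_eq_mul, real_inner_smul_left]
  ring

theorem setIntegral_sphere_of_forall_eq [MeasurableSpace E] [BorelSpace E] {d r c : ℝ}
    (hd : 0 ≤ d) (hr : 0 < r) {g : E → ℝ} (hg : ∀ x ∈ sphere (0 : E) r, g x = c) :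
    ∫ x in sphere (0 : E) r, g x ∂μH[d] = r ^ d * (μH[d] (sphere (0 : E) 1)).toReal * c := by
  have hsphere : sphere (0 : E) r = r • sphere (0 : E) 1 := by
    rw [smul_sphere' hr.ne', smul_zero, Real.norm_eq_abs, abs_of_pos hr, mul_one]
  rw [setIntegral_congr_fun isClosed_sphere.measurableSet hg, setIntegral_const, smul_eq_mul,
    measureReal_def, hsphere, Measure.hausdorffMeasure_smul₀ hd hr.ne', ENNReal.toReal_smul,
    NNReal.smul_def, NNReal.coe_rpow, coe_nnnorm, Real.norm_eq_abs, abs_of_pos hr, smul_eq_mul]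

/-- The boundary integrand `B(r, x, u, ∇u)`, with `a` for `(n - 2) / 2`. -/
theorem pohozaevBoundary_of_radial [CompleteSpace E] {u : E → ℝ} {f : ℝ → ℝ} {r f' : ℝ}
    (hr : 0 < r) (hu : ∀ y, u y = f ‖y‖) (hf : HasDerivAt f f' r) (a : ℝ) {x : E}
    (hx : x ∈ sphere (0 : E) r) :
    a * u x * ⟪gradient u x, r⁻¹ • x⟫ - (1 / 2) * ⟪x, r⁻¹ • x⟫ * ‖gradient u x‖ ^ 2
      + ⟪gradient u x, r⁻¹ • x⟫ * ⟪gradient u x, x⟫ = a * f r * f' + (1 / 2) * r * f' ^ 2 := by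
  have hxr : ‖x‖ = r := mem_sphere_zero_iff_norm.mp hx
  have hx0 : x ≠ 0 := ne_zero_of_mem_sphere hr.ne' ⟨x, hx⟩
  have hgrad : gradient u x = (f' / r) • x := by
    rw [funext hu, ← hxr]
    exact (HasDerivAt.hasGradientAt_comp_norm hx0 (hxr ▸ hf)).gradient
  rw [hgrad, hu, hxr]
  simp only [real_inner_smul_left, real_inner_smul_right, real_inner_self_eq_norm_sq, norm_smul,
    mul_pow, Real.norm_eq_abs, sq_abs, hxr]
  field_simp
  ring

end Radial

theorem energy_conserved_of_hasDerivAt {G : ℝ → ℝ} {v v' v'' : ℝ → ℝ}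
    (hv' : ∀ t, HasDerivAt v (v' t) t) (hv'' : ∀ t, HasDerivAt v' (v'' t) t)
    (hG : ∀ t, HasDerivAt G (-v'' t) (v t)) (s t : ℝ) :
    (1 / 2) * v' s ^ 2 + G (v s) = (1 / 2) * v' t ^ 2 + G (v t) := by
  have hE : ∀ t, HasDerivAt (fun t => (1 / 2) * v' t ^ 2 + G (v t)) 0 t := fun t =>
    ((((hv'' t).pow 2).const_mul (1 / 2)).add ((hG t).comp t (hv' t))).congr_deriv (by ring)
  exact is_const_of_deriv_eq_zero (fun t => (hE t).differentiableAt) (fun t => (hE t).deriv) s t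

noncomputable def fowlerPotential (n κ y : ℝ) : ℝ :=
  κ * ((n - 2) / (2 * n)) * y ^ (2 * n / (n - 2)) - (1 / 2) * ((n - 2) / 2) ^ 2 * y ^ 2

theorem hasDerivAt_fowlerPotential {n κ y : ℝ} (hn : 2 < n) (hy : 0 < y) :
    HasDerivAt (fowlerPotential n κ)
      (κ * y ^ ((n + 2) / (n - 2)) - ((n - 2) / 2) ^ 2 * y) y := by
  have hn2 : n - 2 ≠ 0 := by linarith
  have hexp : 2 * n / (n - 2) - 1 = (n + 2) / (n - 2) := by field_simp; ring
  refine ((((hasDerivAt_id y).rpow_const (p := 2 * n / (n - 2)) (.inl hy.ne')).const_mul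
    (κ * ((n - 2) / (2 * n)))).sub (((hasDerivAt_id y).pow 2).const_mul
      ((1 / 2) * ((n - 2) / 2) ^ 2))).congr_deriv ?_
  simp only [id, hexp]
  field_simp
  ring

/-- `F = f(r)` and `F' = f'(r)` for `f(s) = s^((2-n)/2) w(log s)`, where `w(log r) = w` and
`w'(log r) = w'`. -/
theorem emdenFowler_boundary_density {n κ r w w' F F' : ℝ} (hn : 2 < n) (hr : 0 < r)
    (hw : 0 < w) (hF : F = r ^ ((2 - n) / 2) * w)
    (hF' : F' = r ^ ((2 - n) / 2 - 1) * ((2 - n) / 2 * w + w')) :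
    r ^ (n - 1) * (r * κ * F ^ (2 * n / (n - 2)) / (2 * n / (n - 2))
      + (n - 2) / 2 * F * F' + (1 / 2) * r * F' ^ 2)
      = (1 / 2) * w' ^ 2 + fowlerPotential n κ w := by
  have hn2 : n - 2 ≠ 0 := by linarith
  have hn0 : n ≠ 0 := by linarith
  set α := (2 - n) / 2 with hα
  set q := 2 * n / (n - 2) with hq
  have hrpow : ∀ a b : ℝ, r ^ a * r ^ b = r ^ (a + b) := fun a b => (rpow_add hr a b).symm
  have hFq : r ^ (n - 1) * (r * F ^ q) = w ^ q := by
    rw [hF, mul_rpow (rpow_nonneg hr.le _) hw.le, ← rpow_mul hr.le,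
      show α * q = -n by rw [hα, hq]; field_simp; ring]
    calc r ^ (n - 1) * (r * (r ^ (-n) * w ^ q))
        = r ^ (n - 1) * r ^ (1 : ℝ) * r ^ (-n) * w ^ q := by rw [rpow_one]; ring
      _ = w ^ q := by rw [hrpow, hrpow, show n - 1 + 1 + -n = 0 by ring, rpow_zero, one_mul]
  have hFF' : r ^ (n - 1) * (F * F') = w * (α * w + w') := by
    calc r ^ (n - 1) * (F * F')
        = r ^ (n - 1) * r ^ α * r ^ (α - 1) * (w * (α * w + w')) := by rw [hF, hF']; ring
      _ = _ := by
        rw [hrpow, hrpow, show n - 1 + α + (α - 1) = 0 by rw [hα]; ring, rpow_zero, one_mul]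
  have hF'2 : r ^ (n - 1) * (r * F' ^ 2) = (α * w + w') ^ 2 := by
    calc r ^ (n - 1) * (r * F' ^ 2)
        = r ^ (n - 1) * r ^ (1 : ℝ) * r ^ (α - 1) * r ^ (α - 1) * (α * w + w') ^ 2 := by
          rw [hF', rpow_one]; ring
      _ = _ := by
        rw [hrpow, hrpow, hrpow, show n - 1 + 1 + (α - 1) + (α - 1) = 0 by rw [hα]; ring,
          rpow_zero, one_mul]
  calc r ^ (n - 1) * (r * κ * F ^ q / q + (n - 2) / 2 * F * F' + (1 / 2) * r * F' ^ 2)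
      = κ * (r ^ (n - 1) * (r * F ^ q)) / q + (n - 2) / 2 * (r ^ (n - 1) * (F * F'))
        + (1 / 2) * (r ^ (n - 1) * (r * F' ^ 2)) := by ring
    _ = _ := by
      rw [hFq, hFF', hF'2, fowlerPotential, hα, hq]
      field_simp
      ring

theorem hasDerivAt_rpow_mul_comp_log {v : ℝ → ℝ} {α r w' : ℝ} (hr : 0 < r)
    (hv : HasDerivAt v w' (log r)) :
    HasDerivAt (fun s => s ^ α * v (log s)) (r ^ (α - 1) * (α * v (log r) + w')) r := by
  refine ((Real.hasDerivAt_rpow_const (p := α) (.inl hr.ne')).mul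
    (hv.comp r (Real.hasDerivAt_log hr.ne'))).congr_deriv ?_
  rw [rpow_sub_one hr.ne', Function.comp_apply]
  field_simp

theorem stmt_9_general (n : ℕ) (hn : 3 ≤ n) (κ : ℝ)
    (v v' v'' : ℝ → ℝ) (hvpos : ∀ t, 0 < v t)
    (hv' : ∀ t, HasDerivAt v (v' t) t) (hv'' : ∀ t, HasDerivAt v' (v'' t) t)
    (hode : ∀ t, -v'' t = κ * v t ^ (((n : ℝ) + 2) / ((n : ℝ) - 2))
      - (((n : ℝ) - 2) / 2) ^ 2 * v t)
    (H : ℝ)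
    (hH : H = (1 / 2) * (v' 0) ^ 2
      + κ * (((n : ℝ) - 2) / (2 * (n : ℝ))) * v 0 ^ (2 * (n : ℝ) / ((n : ℝ) - 2))
      - (1 / 2) * (((n : ℝ) - 2) / 2) ^ 2 * (v 0) ^ 2)
    (uH : EuclideanSpace ℝ (Fin n) → ℝ)
    (huH : ∀ x : EuclideanSpace ℝ (Fin n),
      uH x = ‖x‖ ^ (((2 : ℝ) - (n : ℝ)) / 2) * v (Real.log ‖x‖)) :
    ∀ r : ℝ, 0 < r →
      (1 / (2 * (n : ℝ) / ((n : ℝ) - 2))) *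
          (∫ x in sphere (0 : EuclideanSpace ℝ (Fin n)) r,
            ⟪x, r⁻¹ • x⟫ * κ * uH x ^ (2 * (n : ℝ) / ((n : ℝ) - 2)) ∂μH[(n : ℝ) - 1])
        + (∫ x in sphere (0 : EuclideanSpace ℝ (Fin n)) r,
            ((((n : ℝ) - 2) / 2) * uH x * ⟪gradient uH x, r⁻¹ • x⟫
              - (1 / 2) * ⟪x, r⁻¹ • x⟫ * ‖gradient uH x‖ ^ 2
              + ⟪gradient uH x, r⁻¹ • x⟫ * ⟪gradient uH x, x⟫) ∂μH[(n : ℝ) - 1])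
      = (μH[(n : ℝ) - 1] (sphere (0 : EuclideanSpace ℝ (Fin n)) 1)).toReal * H := by
  intro r hr
  have hn2 : (2 : ℝ) < n := by exact_mod_cast hn
  have hd : (0 : ℝ) ≤ n - 1 := by linarith
  have hf := hasDerivAt_rpow_mul_comp_log (α := (2 - n) / 2) hr (hv' (log r))
  have hbulk : ∀ x ∈ sphere (0 : EuclideanSpace ℝ (Fin n)) r,
      ⟪x, r⁻¹ • x⟫ * κ * uH x ^ (2 * (n : ℝ) / (n - 2))
        = r * κ * (r ^ (((2 : ℝ) - n) / 2) * v (log r)) ^ (2 * (n : ℝ) / (n - 2)) := fun x hx => by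
    rw [huH, mem_sphere_zero_iff_norm.mp hx, real_inner_smul_right, real_inner_self_eq_norm_sq,
      mem_sphere_zero_iff_norm.mp hx]
    field_simp
  rw [setIntegral_sphere_of_forall_eq hd hr hbulk,
    setIntegral_sphere_of_forall_eq hd hr fun x hx => pohozaevBoundary_of_radial hr huH hf _ hx]
  have hdensity := emdenFowler_boundary_density (κ := κ) (w' := v' (log r)) hn2 hr
    (hvpos (log r)) rfl rfl
  have henergy := energy_conserved_of_hasDerivAt hv' hv''
    (fun s => (hode s).symm ▸ hasDerivAt_fowlerPotential hn2 (hvpos s)) (log r) 0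
  rw [hH]
  unfold fowlerPotential at henergy hdensity
  linear_combination (μH[(n : ℝ) - 1] (sphere (0 : EuclideanSpace ℝ (Fin n)) 1)).toReal *
    (hdensity.trans henergy)

/-- Conservation law for Fowler solutions: the Pohozaev boundary integral on every sphere
`∂B_r` equals `ω_n H`, where `H` is the Hamiltonian energy of the Fowler solution `v` and
`ω_n` is the `(n-1)`-dimensional Hausdorff measure of the unit sphere. -/
theorem stmt_9 (n : ℕ) (hn : 3 ≤ n) (κ : ℝ) (hκ : 0 < κ)
    (v v' v'' : ℝ → ℝ) (hvpos : ∀ t, 0 < v t)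
    (hv' : ∀ t, HasDerivAt v (v' t) t) (hv'' : ∀ t, HasDerivAt v' (v'' t) t)
    (hode : ∀ t, -v'' t = κ * v t ^ (((n : ℝ) + 2) / ((n : ℝ) - 2))
      - (((n : ℝ) - 2) / 2) ^ 2 * v t)
    (H : ℝ)
    (hH : H = (1 / 2) * (v' 0) ^ 2
      + κ * (((n : ℝ) - 2) / (2 * (n : ℝ))) * v 0 ^ (2 * (n : ℝ) / ((n : ℝ) - 2))
      - (1 / 2) * (((n : ℝ) - 2) / 2) ^ 2 * (v 0) ^ 2)
    (uH : EuclideanSpace ℝ (Fin n) → ℝ)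
    (huH : ∀ x : EuclideanSpace ℝ (Fin n),
      uH x = ‖x‖ ^ (((2 : ℝ) - (n : ℝ)) / 2) * v (Real.log ‖x‖)) :
    ∀ r : ℝ, 0 < r →
      (1 / (2 * (n : ℝ) / ((n : ℝ) - 2))) *
          (∫ x in sphere (0 : EuclideanSpace ℝ (Fin n)) r,
            ⟪x, r⁻¹ • x⟫ * κ * uH x ^ (2 * (n : ℝ) / ((n : ℝ) - 2)) ∂μH[(n : ℝ) - 1])
        + (∫ x in sphere (0 : EuclideanSpace ℝ (Fin n)) r,
            ((((n : ℝ) - 2) / 2) * uH x * ⟪gradient uH x, r⁻¹ • x⟫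
              - (1 / 2) * ⟪x, r⁻¹ • x⟫ * ‖gradient uH x‖ ^ 2
              + ⟪gradient uH x, r⁻¹ • x⟫ * ⟪gradient uH x, x⟫) ∂μH[(n : ℝ) - 1])
      = (μH[(n : ℝ) - 1] (sphere (0 : EuclideanSpace ℝ (Fin n)) 1)).toReal * H :=
  stmt_9_general n hn κ v v' v'' hvpos hv' hv'' hode H hH uH huH
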